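/- arXiv:1210.3924 — 2 statements merged into one kernel-verified Lean document; each statement's English description precedes it below -/
import Mathlib

section
/- Let (Ω, F, μ; (F_i)_{i∈ℤ}) be a σ-finite filtered measure space, 1 < p < ∞, and f ∈ L^p(μ) nonnegative with f ∈ ⋂_i L¹_{F_i⁰}(F, μ). Then Doob's maximal function f* := sup_{i∈ℤ} E[f|F_i] satisfies ‖f*‖_{L^p(μ)} ≤ p/(p−1) · ‖f‖_{L^p(μ)}. -/
/-!
Write `f* = ⨆ i, E[f | ℱ i]`. Cutting `{t < f*}` along the first time the process exceeds `t`
(over the tails `i ≥ -N`, then letting `N → ∞`) and using `∫_A E[f | ℱ i] = ∫_A f` on each piece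
gives the weak bound `t μ{t < f*} ≤ ∫_{t < f*} f`. The layer-cake formula for `μ` and for `f μ`
turns it into `‖f*‖ₚᵖ ≤ p/(p-1) ∫ f (f*)^(p-1)`, and Hölder bounds the right side by
`p/(p-1) ‖f‖ₚ ‖f*‖ₚ^(p-1)`. Dividing is legitimate for the truncations `min f* n`, whose `p`-th
moments are finite because `f` is integrable; monotone convergence removes the truncation.
-/

open MeasureTheory Set
open scoped ENNReal

namespace ENNReal

theorem rpow_le_of_le_mul_rpow_one_sub {a c : ℝ≥0∞} {r : ℝ} (hr : 0 < r) (ha : a ≠ ∞)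
    (h : a ≤ c * a ^ (1 - r)) : a ^ r ≤ c := by
  rcases eq_or_ne a 0 with rfl | ha0
  · simp [ENNReal.zero_rpow_of_pos hr]
  rw [← ENNReal.mul_le_mul_iff_left (ENNReal.rpow_pos (pos_iff_ne_zero.2 ha0) ha).ne'
    (ENNReal.rpow_ne_top_of_ne_zero ha0 ha)]
  calc a ^ r * a ^ (1 - r) = a := by
        rw [← ENNReal.rpow_add _ _ ha0 ha, add_sub_cancel, ENNReal.rpow_one]
    _ ≤ c * a ^ (1 - r) := h

end ENNReal

namespace MeasureTheory

section WeakToStrong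

variable {α : Type*} [MeasurableSpace α] {μ : Measure α} {Y g : α → ℝ≥0∞}

theorem mul_measure_lt_min_le (hweak : ∀ t, t * μ {ω | t < g ω} ≤ ∫⁻ ω in {ω | t < g ω}, Y ω ∂μ)
    (c : ℝ≥0∞) (t : ℝ≥0∞) :
    t * μ {ω | t < min (g ω) c} ≤ ∫⁻ ω in {ω | t < min (g ω) c}, Y ω ∂μ := by
  by_cases htc : t < c
  · simpa [lt_min_iff, htc] using hweak t
  · simp [htc]

theorem lintegral_rpow_le_mul_lintegral_mul_rpow_sub_one (hY : Measurable Y) (hg : Measurable g)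
    (hg_top : ∀ ω, g ω ≠ ∞) {p : ℝ} (hp : 1 < p)
    (hweak : ∀ t, t * μ {ω | t < g ω} ≤ ∫⁻ ω in {ω | t < g ω}, Y ω ∂μ) :
    ∫⁻ ω, g ω ^ p ∂μ ≤ ENNReal.ofReal (p / (p - 1)) * ∫⁻ ω, Y ω * g ω ^ (p - 1) ∂μ := by
  set h : α → ℝ := fun ω => (g ω).toReal
  have hh : Measurable h := hg.ennreal_toReal
  have hh0 : 0 ≤ h := fun _ => ENNReal.toReal_nonneg
  have hset : ∀ t : ℝ, 0 ≤ t → {ω | t < h ω} = {ω | ENNReal.ofReal t < g ω} := fun t ht => by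
    ext ω; exact (ENNReal.ofReal_lt_iff_lt_toReal ht (hg_top ω)).symm
  have hpow : ∀ q : ℝ, 0 ≤ q → ∀ ω, ENNReal.ofReal (h ω ^ q) = g ω ^ q := fun q hq ω => by
    rw [← ENNReal.ofReal_rpow_of_nonneg ENNReal.toReal_nonneg hq, ENNReal.ofReal_toReal (hg_top ω)]
  have hlayer : ∀ t ∈ Ioi (0 : ℝ), μ {ω | t < h ω} * ENNReal.ofReal (t ^ (p - 1)) ≤
      μ.withDensity Y {ω | t < h ω} * ENNReal.ofReal (t ^ (p - 1 - 1)) := fun t (ht : 0 < t) => by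
    have hsplit : t ^ (p - 1) = t * t ^ (p - 1 - 1) := by
      rw [mul_comm, ← Real.rpow_add_one ht.ne', sub_add_cancel]
    rw [withDensity_apply _ (measurableSet_lt measurable_const hh), hset t ht.le, hsplit,
      ENNReal.ofReal_mul ht.le, ← mul_assoc, mul_comm (μ _)]
    exact mul_le_mul_left (hweak _) _
  have hp1 : 0 < p - 1 := sub_pos.2 hp
  -- The layer-cake formula for `μ` with exponent `p`, and for `μ.withDensity Y` with exponent `p - 1`.
  calc ∫⁻ ω, g ω ^ p ∂μ = ∫⁻ ω, ENNReal.ofReal (h ω ^ p) ∂μ := by simp_rw [hpow p (by linarith)]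
    _ = ENNReal.ofReal p * ∫⁻ t in Ioi 0, μ {ω | t < h ω} * ENNReal.ofReal (t ^ (p - 1)) :=
      lintegral_rpow_eq_lintegral_meas_lt_mul μ (ae_of_all _ hh0) hh.aemeasurable (by linarith)
    _ ≤ ENNReal.ofReal p *
        ∫⁻ t in Ioi 0, μ.withDensity Y {ω | t < h ω} * ENNReal.ofReal (t ^ (p - 1 - 1)) :=
      mul_le_mul_right (setLIntegral_mono' measurableSet_Ioi hlayer) _
    _ = ENNReal.ofReal (p / (p - 1)) * (ENNReal.ofReal (p - 1) *
        ∫⁻ t in Ioi 0, μ.withDensity Y {ω | t < h ω} * ENNReal.ofReal (t ^ (p - 1 - 1))) := by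
      rw [← mul_assoc, ← ENNReal.ofReal_mul (by positivity), div_mul_cancel₀ _ hp1.ne']
    _ = ENNReal.ofReal (p / (p - 1)) * ∫⁻ ω, Y ω * g ω ^ (p - 1) ∂μ := by
      rw [← lintegral_rpow_eq_lintegral_meas_lt_mul _ (ae_of_all _ hh0) hh.aemeasurable hp1,
        lintegral_withDensity_eq_lintegral_mul _ hY (hh.pow_const _).ennreal_ofReal]
      simp_rw [Pi.mul_apply, hpow (p - 1) hp1.le]

theorem lintegral_rpow_rpow_le_of_lintegral_ne_top (hY : Measurable Y) (hg : Measurable g)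
    (hg_top : ∀ ω, g ω ≠ ∞) {p : ℝ} (hp : 1 < p)
    (hweak : ∀ t, t * μ {ω | t < g ω} ≤ ∫⁻ ω in {ω | t < g ω}, Y ω ∂μ)
    (hg_fin : ∫⁻ ω, g ω ^ p ∂μ ≠ ∞) :
    (∫⁻ ω, g ω ^ p ∂μ) ^ (1 / p) ≤
      ENNReal.ofReal (p / (p - 1)) * (∫⁻ ω, Y ω ^ p ∂μ) ^ (1 / p) := by
  refine ENNReal.rpow_le_of_le_mul_rpow_one_sub (by positivity) hg_fin ?_
  calc ∫⁻ ω, g ω ^ p ∂μ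
      ≤ ENNReal.ofReal (p / (p - 1)) * ∫⁻ ω, Y ω * g ω ^ (p - 1) ∂μ :=
        lintegral_rpow_le_mul_lintegral_mul_rpow_sub_one hY hg hg_top hp hweak
    _ ≤ ENNReal.ofReal (p / (p - 1)) *
        ((∫⁻ ω, Y ω ^ p ∂μ) ^ (1 / p) * (∫⁻ ω, g ω ^ p ∂μ) ^ (1 / p.conjExponent)) :=
      mul_le_mul_right (ENNReal.lintegral_mul_rpow_le_lintegral_rpow_mul_lintegral_rpow
        (.conjExponent hp) hY.aemeasurable hg.aemeasurable) _
    _ = ENNReal.ofReal (p / (p - 1)) * (∫⁻ ω, Y ω ^ p ∂μ) ^ (1 / p) *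
        (∫⁻ ω, g ω ^ p ∂μ) ^ (1 - 1 / p) := by
      rw [← mul_assoc, Real.conjExponent, one_div_div]
      congr 2
      field_simp

theorem lintegral_rpow_rpow_le_of_mul_measure_lt_le (hY : Measurable Y)
    (hY_fin : ∫⁻ ω, Y ω ∂μ ≠ ∞) (hg : Measurable g) {p : ℝ} (hp : 1 < p)
    (hweak : ∀ t, t * μ {ω | t < g ω} ≤ ∫⁻ ω in {ω | t < g ω}, Y ω ∂μ) :
    (∫⁻ ω, g ω ^ p ∂μ) ^ (1 / p) ≤
      ENNReal.ofReal (p / (p - 1)) * (∫⁻ ω, Y ω ^ p ∂μ) ^ (1 / p) := by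
  have hp0 : 0 < p := by linarith
  have htrunc : ∀ n : ℕ, (∫⁻ ω, min (g ω) n ^ p ∂μ) ^ (1 / p) ≤
      ENNReal.ofReal (p / (p - 1)) * (∫⁻ ω, Y ω ^ p ∂μ) ^ (1 / p) := fun n => by
    have hgn : Measurable fun ω => min (g ω) n := hg.min measurable_const
    have hgn_top : ∀ ω, min (g ω) n ≠ ∞ :=
      fun ω => ((min_le_right _ _).trans_lt (ENNReal.natCast_lt_top n)).ne
    have hweak_n := mul_measure_lt_min_le hweak n
    refine lintegral_rpow_rpow_le_of_lintegral_ne_top hY hgn hgn_top hp hweak_n ?_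
    have hYn : ∫⁻ ω, Y ω * min (g ω) n ^ (p - 1) ∂μ ≤ (∫⁻ ω, Y ω ∂μ) * (n : ℝ≥0∞) ^ (p - 1) := by
      rw [← lintegral_mul_const _ hY]
      exact lintegral_mono fun ω => mul_le_mul_right
        (ENNReal.rpow_le_rpow (min_le_right _ _) (by linarith)) _
    refine ne_top_of_le_ne_top (ENNReal.mul_ne_top ENNReal.ofReal_ne_top ?_)
      (lintegral_rpow_le_mul_lintegral_mul_rpow_sub_one hY hgn hgn_top hp hweak_n)
    exact ne_top_of_le_ne_top (ENNReal.mul_ne_top hY_fin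
      (ENNReal.rpow_ne_top_of_nonneg (by linarith) (ENNReal.natCast_ne_top n))) hYn
  have hlim : ∫⁻ ω, g ω ^ p ∂μ = ⨆ n : ℕ, ∫⁻ ω, min (g ω) n ^ p ∂μ := by
    rw [← lintegral_iSup (fun n => (hg.min measurable_const).pow_const p)
      fun m n hmn ω => ENNReal.rpow_le_rpow (min_le_min_left _ (Nat.cast_le.2 hmn)) hp0.le]
    congr with ω
    have hsup : ⨆ n : ℕ, min (g ω) n = g ω := by
      rw [← inf_iSup_eq, ENNReal.iSup_natCast, inf_top_eq]
    conv_lhs => rw [← hsup]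
    exact (ENNReal.orderIsoRpow p hp0).map_iSup _
  rw [hlim, one_div, ENNReal.rpow_inv_le_iff hp0, iSup_le_iff]
  intro n
  rw [← ENNReal.rpow_inv_le_iff hp0, ← one_div]
  exact htrunc n

end WeakToStrong

section FirstEntry

variable {Ω : Type*} {m0 : MeasurableSpace Ω} {μ : Measure Ω}

theorem mul_measure_lt_iSup_le_setLIntegral {ι : Type*} [LinearOrder ι]
    [LocallyFiniteOrderBot ι] [Countable ι] (ℱ : Filtration ι m0) {X : ι → Ω → ℝ≥0∞}
    (hX : ∀ i, Measurable[ℱ i] (X i)) {Y : Ω → ℝ≥0∞}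
    (hXY : ∀ i s, MeasurableSet[ℱ i] s → ∫⁻ ω in s, X i ω ∂μ ≤ ∫⁻ ω in s, Y ω ∂μ)
    (t : ℝ≥0∞) :
    t * μ {ω | t < ⨆ i, X i ω} ≤ ∫⁻ ω in {ω | t < ⨆ i, X i ω}, Y ω ∂μ := by
  set E : ι → Set Ω := fun i => {ω | t < X i ω}
  have hS : {ω | t < ⨆ i, X i ω} = ⋃ i, disjointed E i := by
    rw [iUnion_disjointed]
    ext ω
    simp [E, lt_iSup_iff]
  -- `disjointed E i` is the event that `X` first exceeds `t` at time `i`.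
  have hD : ∀ i, MeasurableSet[ℱ i] (disjointed E i) := fun i => by
    rw [disjointed_eq_inter_compl]
    exact (measurableSet_lt measurable_const (hX i)).inter <| .iInter fun j => .iInter fun hj =>
      (measurableSet_lt measurable_const ((hX j).mono (ℱ.mono hj.le) le_rfl)).compl
  have hD₀ : ∀ i, MeasurableSet (disjointed E i) := fun i => ℱ.le i _ (hD i)
  rw [hS, measure_iUnion (disjoint_disjointed E) hD₀,
    lintegral_iUnion hD₀ (disjoint_disjointed E), ← ENNReal.tsum_mul_left]
  refine ENNReal.tsum_le_tsum fun i => ?_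
  calc t * μ (disjointed E i) = ∫⁻ ω in disjointed E i, t ∂μ := (setLIntegral_const _ _).symm
    _ ≤ ∫⁻ ω in disjointed E i, X i ω ∂μ :=
      setLIntegral_mono ((hX i).mono (ℱ.le i) le_rfl) fun ω hω => (disjointed_subset E i hω).le
    _ ≤ ∫⁻ ω in disjointed E i, Y ω ∂μ := hXY i _ (hD i)

def Filtration.precomp {ι κ : Type*} [Preorder ι] [Preorder κ] (ℱ : Filtration ι m0) (φ : κ → ι)
    (hφ : Monotone φ) : Filtration κ m0 where
  seq k := ℱ (φ k)
  mono' _ _ h := ℱ.mono (hφ h)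
  le' k := ℱ.le (φ k)

theorem mul_measure_lt_iSup_int_le_setLIntegral (ℱ : Filtration ℤ m0) {X : ℤ → Ω → ℝ≥0∞}
    (hX : ∀ i, Measurable[ℱ i] (X i)) {Y : Ω → ℝ≥0∞}
    (hXY : ∀ i s, MeasurableSet[ℱ i] s → ∫⁻ ω in s, X i ω ∂μ ≤ ∫⁻ ω in s, Y ω ∂μ)
    (t : ℝ≥0∞) :
    t * μ {ω | t < ⨆ i, X i ω} ≤ ∫⁻ ω in {ω | t < ⨆ i, X i ω}, Y ω ∂μ := by
  set S : ℕ → Set Ω := fun N => {ω | t < ⨆ n : ℕ, X (n - N) ω}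
  have hS : {ω | t < ⨆ i, X i ω} = ⋃ N, S N := by
    ext ω
    simp only [S, mem_ofPred_eq, mem_iUnion, lt_iSup_iff]
    refine ⟨fun ⟨i, hi⟩ => ⟨i.natAbs, (i + i.natAbs).toNat, ?_⟩, fun ⟨_, n, hn⟩ => ⟨_, hn⟩⟩
    rwa [show ((i + i.natAbs).toNat : ℤ) - i.natAbs = i by omega]
  have hmono : Monotone S := fun N M hNM ω hω => by
    simp only [S, mem_ofPred_eq, lt_iSup_iff] at hω ⊢
    obtain ⟨n, hn⟩ := hω
    exact ⟨n + (M - N), by rwa [show ((n + (M - N) : ℕ) : ℤ) - M = n - N by omega]⟩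
  have hSN : ∀ N, t * μ (S N) ≤ ∫⁻ ω in S N, Y ω ∂μ := fun N =>
    mul_measure_lt_iSup_le_setLIntegral
      (ℱ.precomp (fun n : ℕ => (n : ℤ) - N) fun _ _ h => by simpa using h)
      (fun _ => hX _) (fun _ => hXY _) t
  rw [hS, hmono.measure_iUnion, ENNReal.mul_iSup]
  exact iSup_le fun N => (hSN N).trans (lintegral_mono_set (subset_iUnion S N))

end FirstEntry

theorem setLIntegral_ofReal_condExp {Ω : Type*} {m m0 : MeasurableSpace Ω} {μ : Measure Ω}
    (hm : m ≤ m0) [SigmaFinite (μ.trim hm)] {f : Ω → ℝ} (hf : Integrable f μ) (hf0 : 0 ≤ᵐ[μ] f)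
    {s : Set Ω} (hs : MeasurableSet[m] s) :
    ∫⁻ ω in s, ENNReal.ofReal (μ[f|m] ω) ∂μ = ∫⁻ ω in s, ENNReal.ofReal (f ω) ∂μ := by
  rw [← ofReal_integral_eq_lintegral_ofReal integrable_condExp.integrableOn
      (ae_restrict_of_ae (condExp_nonneg hf0)),
    ← ofReal_integral_eq_lintegral_ofReal hf.integrableOn (ae_restrict_of_ae hf0),
    setIntegral_condExp hm hf hs]

end MeasureTheory

open MeasureTheory

theorem stmt5_general {Ω : Type*} {m0 : MeasurableSpace Ω} (μ : Measure Ω)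
    (ℱ : MeasureTheory.Filtration ℤ m0) [∀ i, SigmaFinite (μ.trim (ℱ.le i))]
    (p : ℝ) (hp : 1 < p)
    (f : Ω → ℝ) (hf : Measurable f) (hf0 : 0 ≤ f) :
    (∫⁻ ω, (⨆ i : ℤ, ENNReal.ofReal ((μ[f|ℱ i]) ω)) ^ p ∂μ) ^ (1 / p) ≤
      ENNReal.ofReal (p / (p - 1)) * (∫⁻ ω, ENNReal.ofReal (f ω) ^ p ∂μ) ^ (1 / p) := by
  by_cases hfi : Integrable f μ
  · have hX : ∀ i, Measurable[ℱ i] fun ω => ENNReal.ofReal ((μ[f|ℱ i]) ω) := fun i =>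
      stronglyMeasurable_condExp.measurable.ennreal_ofReal
    refine lintegral_rpow_rpow_le_of_mul_measure_lt_le hf.ennreal_ofReal
      hfi.lintegral_lt_top.ne (Measurable.iSup fun i => (hX i).mono (ℱ.le i) le_rfl) hp
      (mul_measure_lt_iSup_int_le_setLIntegral ℱ hX fun i s hs => ?_)
    exact (setLIntegral_ofReal_condExp (ℱ.le i) hfi (ae_of_all _ hf0) hs).le
  · -- `μ[f|m]` is `0` for non-integrable `f`.
    have hp0 : 0 < p := by linarith
    simp [condExp_of_not_integrable hfi, ENNReal.zero_rpow_of_pos hp0, hp0]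

/-- Doob's `L^p` maximal inequality, `1 < p < ∞`:
`‖f*‖_p ≤ (p/(p-1)) ‖f‖_p` for nonnegative `f ∈ L^p(μ) ∩ 𝓛`. -/
theorem stmt5 {Ω : Type*} {m0 : MeasurableSpace Ω} (μ : Measure Ω) [SigmaFinite μ]
    (ℱ : MeasureTheory.Filtration ℤ m0) [∀ i, SigmaFinite (μ.trim (ℱ.le i))]
    (p : ℝ) (hp : 1 < p)
    (f : Ω → ℝ) (hf : Measurable f) (hf0 : 0 ≤ f)
    (hfLp : MemLp f (ENNReal.ofReal p) μ)
    (hf𝓛 : ∀ (i : ℤ) (E : Set Ω), MeasurableSet[ℱ i] E → μ E < ∞ →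
      Integrable f (μ.restrict E)) :
    (∫⁻ ω, (⨆ i : ℤ, ENNReal.ofReal ((μ[f|ℱ i]) ω)) ^ p ∂μ) ^ (1 / p) ≤
      ENNReal.ofReal (p / (p - 1)) * (∫⁻ ω, ENNReal.ofReal (f ω) ^ p ∂μ) ^ (1 / p) :=
  stmt5_general μ ℱ p hp f hf hf0
end

section
/- Let (Ω, F, μ; (F_i)_{i∈ℤ}) be a σ-finite filtered measure space, (α_i)_{i∈ℤ} nonnegative bounded F_i-measurable functions, and 1 < p ≤ q < ∞. If the bilinear bound ∑_{i∈ℤ} ∫_Ω α_i E[f|F_i] E[g|F_i] dμ ≤ C ‖f‖_{L^p(μ)} ‖g‖_{L^{q'}(μ)} holds for all nonnegative f ∈ L^p(μ) ∩ 𝓛 and g ∈ L^{q'}(μ) ∩ 𝓛, then for every i ∈ ℤ and E ∈ F_i with μ(E) < ∞: ( ∫_E ( ∑_{j≥i} α_j )^q dμ )^{1/q} ≤ C μ(E)^{1/p} and ( ∫_E ( ∑_{j≥i} α_j )^{p'} dμ )^{1/p'} ≤ C μ(E)^{1/q'}. -/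
/-!
Test the bilinear bound with `g = 1_E` (resp. `f = 1_E`). For `j ≥ i` the set `E` is
`F_j`-measurable, so `E[1_E | F_j] = 1_E`, and self-adjointness of `E[· | F_j]` against the bounded
`F_j`-measurable weight `α_j 1_E` shows that the bilinear sum dominates `∫_E S ψ` for the other
function `ψ`, where `S = ∑_{j ≥ i} α_j`. Hence `ψ ↦ ∫_E S ψ` has norm at most `C μ(E)^{1/p}` on
`L^{q'}` (resp. `C μ(E)^{1/q'}` on `L^p`), and duality, tested on the extremal functions
`1_E min(S, n)^{q-1}` and followed by monotone convergence in `n`, bounds `‖1_E S‖_q`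
(resp. `‖1_E S‖_{p'}`).
-/

open MeasureTheory Set
open scoped ENNReal

namespace ENNReal

lemma rpow_le_of_le_mul_rpow {A K : ℝ≥0∞} (hA : A ≠ ∞) {a b : ℝ} (ha : 0 < a) (hb : 0 ≤ b)
    (hab : a + b = 1) (h : A ≤ K * A ^ b) : A ^ a ≤ K := by
  rcases eq_or_ne A 0 with rfl | hA0
  · simp [ENNReal.zero_rpow_of_pos ha]
  rw [← ENNReal.mul_le_mul_iff_left (ENNReal.rpow_pos (pos_iff_ne_zero.2 hA0) hA).ne'
    (ENNReal.rpow_ne_top_of_nonneg hb hA), ← ENNReal.rpow_add_of_nonneg _ _ ha.le hb, hab,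
    ENNReal.rpow_one]
  exact h

lemma iSup_min_natCast_rpow (x : ℝ≥0∞) {s : ℝ} (hs : 0 < s) :
    ⨆ n : ℕ, min x n ^ s = x ^ s := by
  have hx : ⨆ n : ℕ, min x n = x := by
    rw [← inf_iSup_eq, iSup_natCast, inf_top_eq]
  conv_rhs => rw [← hx]
  exact ((orderIsoRpow s hs).map_iSup _).symm

end ENNReal

section

variable {Ω : Type*} {m0 : MeasurableSpace Ω} {μ : Measure Ω}

lemma lintegral_rpow_eq_iSup_lintegral_min_natCast_rpow {f : Ω → ℝ≥0∞} (hf : Measurable f)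
    {s : ℝ} (hs : 0 < s) :
    ∫⁻ ω, f ω ^ s ∂μ = ⨆ n : ℕ, ∫⁻ ω, min (f ω) n ^ s ∂μ := by
  rw [← lintegral_iSup (fun n => (hf.min measurable_const).pow_const s)
    fun m n hmn ω => ENNReal.rpow_le_rpow (min_le_min_left _ (Nat.cast_le.2 hmn)) hs.le]
  simp_rw [ENNReal.iSup_min_natCast_rpow _ hs]

lemma memLp_of_bounded_of_support_subset {g : Ω → ℝ} (hg : AEStronglyMeasurable g μ) {M : ℝ}
    (hM : ∀ ω, ‖g ω‖ ≤ M) {E : Set Ω} (hE : MeasurableSet E) (hμE : μ E ≠ ∞)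
    (hgE : Function.support g ⊆ E) (e : ℝ≥0∞) : MemLp g e μ := by
  rw [← indicator_eq_self.2 hgE, memLp_indicator_iff_restrict hE]
  have : IsFiniteMeasure (μ.restrict E) := isFiniteMeasure_restrict.2 hμE
  exact MemLp.of_bound hg.restrict M (ae_of_all _ hM)

lemma lintegral_ofReal_indicator_one_rpow {E : Set Ω} (hE : MeasurableSet E) {r : ℝ}
    (hr : 0 < r) : ∫⁻ ω, ENNReal.ofReal (E.indicator 1 ω) ^ r ∂μ = μ E := by
  rw [← lintegral_indicator_one hE]
  refine lintegral_congr fun ω => ?_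
  by_cases hω : ω ∈ E <;> simp [hω, ENNReal.zero_rpow_of_pos hr]

lemma setLIntegral_rpow_inv_le_of_forall_of_bounded {S : Ω → ℝ≥0∞} (hS : Measurable S)
    {c : ℝ≥0∞} (hc : c ≠ ∞) (hSc : ∀ ω, S ω ≤ c) {E : Set Ω} (hE : MeasurableSet E) (hμE : μ E ≠ ∞)
    {s t : ℝ} (hst : s.HolderConjugate t) {K : ℝ≥0∞}
    (h : ∀ g : Ω → ℝ, Measurable g → 0 ≤ g → (∀ e, MemLp g e μ) →
      ∫⁻ ω in E, S ω * ENNReal.ofReal (g ω) ∂μ ≤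
        K * (∫⁻ ω, ENNReal.ofReal (g ω) ^ t ∂μ) ^ t⁻¹) :
    (∫⁻ ω in E, S ω ^ s ∂μ) ^ s⁻¹ ≤ K := by
  have hs1 : 0 ≤ s - 1 := hst.sub_one_pos.le
  have hSne : ∀ ω, S ω ^ (s - 1) ≠ ∞ := fun ω =>
    ENNReal.rpow_ne_top_of_nonneg hs1 (ne_top_of_le_ne_top hc (hSc ω))
  -- the extremal function for the duality between `L^s` and `L^t`
  set g : Ω → ℝ := E.indicator fun ω => (S ω ^ (s - 1)).toReal
  have hg : ∀ ω ∈ E, ENNReal.ofReal (g ω) = S ω ^ (s - 1) := fun ω hω => by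
    simp [g, hω, ENNReal.ofReal_toReal (hSne ω)]
  have hg_pair : ∫⁻ ω in E, S ω * ENNReal.ofReal (g ω) ∂μ = ∫⁻ ω in E, S ω ^ s ∂μ := by
    refine setLIntegral_congr_fun hE fun ω hω => ?_
    conv_rhs => rw [← add_sub_cancel 1 s, ENNReal.rpow_add_of_nonneg _ _ zero_le_one hs1,
      ENNReal.rpow_one]
    rw [hg ω hω]
  have hg_norm : ∫⁻ ω, ENNReal.ofReal (g ω) ^ t ∂μ = ∫⁻ ω in E, S ω ^ s ∂μ := by
    rw [← lintegral_indicator hE]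
    refine lintegral_congr fun ω => ?_
    by_cases hω : ω ∈ E
    · rw [hg ω hω, indicator_of_mem hω, ← ENNReal.rpow_mul, hst.sub_one_mul_conj]
    · simp [g, hω, ENNReal.zero_rpow_of_pos hst.symm.pos]
  have hfin : ∫⁻ ω in E, S ω ^ s ∂μ ≠ ∞ := by
    refine ne_top_of_le_ne_top
      (ENNReal.mul_ne_top (ENNReal.rpow_ne_top_of_nonneg hst.nonneg hc) hμE) ?_
    calc ∫⁻ ω in E, S ω ^ s ∂μ ≤ ∫⁻ _ in E, c ^ s ∂μ :=
          lintegral_mono fun ω => ENNReal.rpow_le_rpow (hSc ω) hst.nonneg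
      _ = c ^ s * μ E := setLIntegral_const E _
  have hgM : ∀ ω, ‖g ω‖ ≤ (c ^ (s - 1)).toReal := fun ω => by
    by_cases hω : ω ∈ E
    · simp only [g, indicator_of_mem hω, Real.norm_of_nonneg ENNReal.toReal_nonneg]
      exact ENNReal.toReal_mono (ENNReal.rpow_ne_top_of_nonneg hs1 hc)
        (ENNReal.rpow_le_rpow (hSc ω) hs1)
    · simp [g, hω]
  have hgm : Measurable g := ((hS.pow_const _).ennreal_toReal).indicator hE
  have key := h g hgm (indicator_nonneg fun _ _ => ENNReal.toReal_nonneg)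
    (memLp_of_bounded_of_support_subset hgm.aestronglyMeasurable hgM hE hμE
      support_indicator_subset)
  rw [hg_pair, hg_norm] at key
  exact ENNReal.rpow_le_of_le_mul_rpow hfin hst.inv_pos hst.symm.inv_nonneg
    hst.inv_add_inv_eq_one key

lemma setLIntegral_rpow_inv_le_of_forall {S : Ω → ℝ≥0∞} (hS : Measurable S) {E : Set Ω}
    (hE : MeasurableSet E) (hμE : μ E ≠ ∞) {s t : ℝ} (hst : s.HolderConjugate t) {K : ℝ≥0∞}
    (h : ∀ g : Ω → ℝ, Measurable g → 0 ≤ g → (∀ e, MemLp g e μ) →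
      ∫⁻ ω in E, S ω * ENNReal.ofReal (g ω) ∂μ ≤
        K * (∫⁻ ω, ENNReal.ofReal (g ω) ^ t ∂μ) ^ t⁻¹) :
    (∫⁻ ω in E, S ω ^ s ∂μ) ^ s⁻¹ ≤ K := by
  rw [ENNReal.rpow_inv_le_iff hst.pos,
    lintegral_rpow_eq_iSup_lintegral_min_natCast_rpow hS hst.pos]
  refine iSup_le fun n => ?_
  rw [← ENNReal.rpow_inv_le_iff hst.pos]
  refine setLIntegral_rpow_inv_le_of_forall_of_bounded (hS.min measurable_const)
    (ENNReal.natCast_ne_top n) (fun _ => min_le_right _ _) hE hμE hst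
    fun g hgm hg0 hgLp => (h g hgm hg0 hgLp).trans' ?_
  exact lintegral_mono fun ω => mul_le_mul_left (min_le_left _ _) _

lemma lintegral_ofReal_mul_condExp {m : MeasurableSpace Ω} (hm : m ≤ m0)
    [SigmaFinite (μ.trim hm)] {φ h : Ω → ℝ} (hφm : StronglyMeasurable[m] φ) (hφ0 : 0 ≤ φ)
    {M : ℝ} (hφM : ∀ ω, φ ω ≤ M) (hh : Integrable h μ) (hh0 : 0 ≤ h) :
    ∫⁻ ω, ENNReal.ofReal (φ ω) * ENNReal.ofReal ((μ[h|m]) ω) ∂μ =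
      ∫⁻ ω, ENNReal.ofReal (φ ω) * ENNReal.ofReal (h ω) ∂μ := by
  have hφ : AEStronglyMeasurable[m0] φ μ := (hφm.mono hm).aestronglyMeasurable
  have hφM' : ∀ᵐ ω ∂μ, ‖φ ω‖ ≤ M := ae_of_all _ fun ω => by
    rw [Real.norm_of_nonneg (hφ0 ω)]; exact hφM ω
  have hφh : Integrable (φ * h) μ := hh.bdd_mul hφ hφM'
  have hφh_nonneg : 0 ≤ φ * h := mul_nonneg hφ0 hh0
  have hcond_nonneg : 0 ≤ᵐ[μ] φ * μ[h|m] := by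
    filter_upwards [condExp_nonneg (m := m) (ae_of_all _ hh0)] with ω hω
    exact mul_nonneg (hφ0 ω) hω
  simp_rw [← ENNReal.ofReal_mul (hφ0 _)]
  calc ∫⁻ ω, ENNReal.ofReal ((φ * μ[h|m]) ω) ∂μ
      = ENNReal.ofReal (∫ ω, (φ * μ[h|m]) ω ∂μ) :=
        (ofReal_integral_eq_lintegral_ofReal (integrable_condExp.bdd_mul hφ hφM')
          hcond_nonneg).symm
    _ = ENNReal.ofReal (∫ ω, (φ * h) ω ∂μ) := by
        rw [← integral_congr_ae (condExp_mul_of_stronglyMeasurable_left hφm hφh hh),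
          integral_condExp hm]
    _ = ∫⁻ ω, ENNReal.ofReal ((φ * h) ω) ∂μ :=
        ofReal_integral_eq_lintegral_ofReal hφh (ae_of_all _ hφh_nonneg)

lemma setLIntegral_ofReal_mul_eq_lintegral_condExp {m : MeasurableSpace Ω} (hm : m ≤ m0)
    [SigmaFinite (μ.trim hm)] {E : Set Ω} (hE : MeasurableSet[m] E) (hμE : μ E ≠ ∞)
    {a ψ : Ω → ℝ} (ha : StronglyMeasurable[m] a) (ha0 : 0 ≤ a) {M : ℝ} (haM : ∀ ω, a ω ≤ M)
    (hψ : Integrable ψ μ) (hψ0 : 0 ≤ ψ) :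
    ∫⁻ ω in E, ENNReal.ofReal (a ω) * ENNReal.ofReal (ψ ω) ∂μ =
      ∫⁻ ω, ENNReal.ofReal (a ω) * ENNReal.ofReal ((μ[E.indicator 1|m]) ω) *
        ENNReal.ofReal ((μ[ψ|m]) ω) ∂μ := by
  have hχ : μ[E.indicator 1|m] = E.indicator 1 :=
    condExp_of_stronglyMeasurable hm (stronglyMeasurable_one.indicator hE)
      ((integrable_indicator_iff (hm E hE)).2 (integrableOn_const (C := (1 : ℝ)) hμE))
  have haχ : ∀ ω, ENNReal.ofReal (a ω) * ENNReal.ofReal (E.indicator 1 ω) =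
      ENNReal.ofReal (E.indicator a ω) := fun ω => by
    by_cases hω : ω ∈ E <;> simp [hω]
  have haM' : ∀ ω, E.indicator a ω ≤ M := fun ω => by
    by_cases hω : ω ∈ E
    · simpa [hω] using haM ω
    · simpa [hω] using (ha0 ω).trans (haM ω)
  simp_rw [hχ, haχ]
  rw [lintegral_ofReal_mul_condExp hm (ha.indicator hE) (indicator_nonneg fun ω _ => ha0 ω)
    haM' hψ hψ0, ← lintegral_indicator (hm E hE)]
  refine lintegral_congr fun ω => ?_
  by_cases hω : ω ∈ E <;> simp [hω]

lemma setLIntegral_tsum_mul_le_tsum_lintegral_condExp {ι : Type*} [Preorder ι] [DecidableLE ι]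
    [Countable ι] (ℱ : Filtration ι m0) [∀ i, SigmaFinite (μ.trim (ℱ.le i))] {α : ι → Ω → ℝ}
    (hαm : ∀ j, StronglyMeasurable[ℱ j] (α j)) (hα0 : ∀ j, 0 ≤ α j)
    (hαM : ∀ j, ∃ M, ∀ ω, α j ω ≤ M) {i : ι} {E : Set Ω} (hE : MeasurableSet[ℱ i] E)
    (hμE : μ E ≠ ∞) {ψ : Ω → ℝ} (hψ : Integrable ψ μ) (hψ0 : 0 ≤ ψ) :
    ∫⁻ ω in E, (∑' j, if i ≤ j then ENNReal.ofReal (α j ω) else 0) * ENNReal.ofReal (ψ ω) ∂μ ≤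
      ∑' j, ∫⁻ ω, ENNReal.ofReal (α j ω) * ENNReal.ofReal ((μ[E.indicator 1|ℱ j]) ω) *
        ENNReal.ofReal ((μ[ψ|ℱ j]) ω) ∂μ := by
  simp_rw [← ENNReal.tsum_mul_right]
  have hmeas : ∀ j, AEMeasurable (fun ω => (if i ≤ j then ENNReal.ofReal (α j ω) else 0) *
      ENNReal.ofReal (ψ ω)) (μ.restrict E) := fun j =>
    (Measurable.ite (.const _) ((hαm j).mono (ℱ.le j)).measurable.ennreal_ofReal
      measurable_const).aemeasurable.mul hψ.aemeasurable.ennreal_ofReal.restrict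
  rw [lintegral_tsum hmeas]
  refine ENNReal.tsum_le_tsum fun j => ?_
  by_cases hij : i ≤ j
  · simp only [hij, if_true]
    obtain ⟨M, hM⟩ := hαM j
    exact (setLIntegral_ofReal_mul_eq_lintegral_condExp (ℱ.le j) (ℱ.mono hij E hE) hμE
      (hαm j) (hα0 j) hM hψ hψ0).le
  · simp [hij]

lemma setLIntegral_tsum_rpow_inv_le_of_forall {ι : Type*} [Preorder ι] [DecidableLE ι]
    [Countable ι] (ℱ : Filtration ι m0) [∀ i, SigmaFinite (μ.trim (ℱ.le i))] {α : ι → Ω → ℝ}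
    (hαm : ∀ j, StronglyMeasurable[ℱ j] (α j)) (hα0 : ∀ j, 0 ≤ α j)
    (hαM : ∀ j, ∃ M, ∀ ω, α j ω ≤ M) {i : ι} {E : Set Ω} (hE : MeasurableSet[ℱ i] E)
    (hμE : μ E ≠ ∞) {s t : ℝ} (hst : s.HolderConjugate t) {K : ℝ≥0∞}
    (h : ∀ g : Ω → ℝ, Measurable g → 0 ≤ g → (∀ e, MemLp g e μ) →
      ∑' j, ∫⁻ ω, ENNReal.ofReal (α j ω) * ENNReal.ofReal ((μ[E.indicator 1|ℱ j]) ω) *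
        ENNReal.ofReal ((μ[g|ℱ j]) ω) ∂μ ≤ K * (∫⁻ ω, ENNReal.ofReal (g ω) ^ t ∂μ) ^ t⁻¹) :
    (∫⁻ ω in E, (∑' j, if i ≤ j then ENNReal.ofReal (α j ω) else 0) ^ s ∂μ) ^ s⁻¹ ≤ K := by
  have hS : Measurable fun ω => ∑' j, if i ≤ j then ENNReal.ofReal (α j ω) else 0 :=
    Measurable.tsum fun j => Measurable.ite (.const _)
      ((hαm j).mono (ℱ.le j)).measurable.ennreal_ofReal measurable_const
  refine setLIntegral_rpow_inv_le_of_forall hS (ℱ.le i E hE) hμE hst fun g hgm hg0 hgLp => ?_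
  exact (setLIntegral_tsum_mul_le_tsum_lintegral_condExp ℱ hαm hα0 hαM hE hμE
    (memLp_one_iff_integrable.1 (hgLp 1)) hg0).trans (h g hgm hg0 hgLp)

end

theorem stmt10_general {Ω : Type*} {m0 : MeasurableSpace Ω} (μ : Measure Ω)
    (ℱ : MeasureTheory.Filtration ℤ m0) [∀ i, SigmaFinite (μ.trim (ℱ.le i))]
    (p q : ℝ) (hp : 1 < p) (hpq : p ≤ q)
    (α : ℤ → Ω → ℝ) (hαmeas : ∀ i, StronglyMeasurable[ℱ i] (α i))
    (hα0 : ∀ i ω, 0 ≤ α i ω) (hαbd : ∀ i, ∃ M : ℝ, ∀ ω, α i ω ≤ M)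
    (C : ℝ)
    (hbil : ∀ f g : Ω → ℝ, Measurable f → 0 ≤ f → MemLp f (ENNReal.ofReal p) μ →
      (∀ (i : ℤ) (E : Set Ω), MeasurableSet[ℱ i] E → μ E < ∞ →
        Integrable f (μ.restrict E)) →
      Measurable g → 0 ≤ g → MemLp g (ENNReal.ofReal (q / (q - 1))) μ →
      (∀ (i : ℤ) (E : Set Ω), MeasurableSet[ℱ i] E → μ E < ∞ →
        Integrable g (μ.restrict E)) →
      ∑' i : ℤ, ∫⁻ ω, ENNReal.ofReal (α i ω) * ENNReal.ofReal ((μ[f|ℱ i]) ω) *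
          ENNReal.ofReal ((μ[g|ℱ i]) ω) ∂μ ≤
        ENNReal.ofReal C * (∫⁻ ω, ENNReal.ofReal (f ω) ^ p ∂μ) ^ (1 / p) *
          (∫⁻ ω, ENNReal.ofReal (g ω) ^ (q / (q - 1)) ∂μ) ^ (1 - 1 / q)) :
    ∀ (i : ℤ) (E : Set Ω), MeasurableSet[ℱ i] E → μ E < ∞ →
      (∫⁻ ω in E, (∑' j : ℤ, if i ≤ j then ENNReal.ofReal (α j ω) else 0) ^ q ∂μ) ^
          (1 / q) ≤ ENNReal.ofReal C * μ E ^ (1 / p) ∧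
      (∫⁻ ω in E, (∑' j : ℤ, if i ≤ j then ENNReal.ofReal (α j ω) else 0) ^
            (p / (p - 1)) ∂μ) ^ (1 - 1 / p) ≤ ENNReal.ofReal C * μ E ^ (1 - 1 / q) := by
  intro i E hE hμE
  have hmE : MeasurableSet E := ℱ.le i E hE
  have hp' : p.HolderConjugate (p / (p - 1)) :=
    (Real.holderConjugate_iff_eq_conjExponent hp).2 rfl
  have hq' : q.HolderConjugate (q / (q - 1)) :=
    (Real.holderConjugate_iff_eq_conjExponent (hp.trans_le hpq)).2 rfl
  have hχm : Measurable (E.indicator (1 : Ω → ℝ)) := measurable_one.indicator hmE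
  have hχ0 : 0 ≤ E.indicator (1 : Ω → ℝ) := indicator_nonneg fun _ _ => zero_le_one
  have hχLp : ∀ e, MemLp (E.indicator (1 : Ω → ℝ)) e μ := fun e =>
    memLp_indicator_const e hmE 1 (.inr hμE.ne)
  have hχint : Integrable (E.indicator (1 : Ω → ℝ)) μ := memLp_one_iff_integrable.1 (hχLp 1)
  constructor
  · rw [one_div q]
    refine setLIntegral_tsum_rpow_inv_le_of_forall ℱ hαmeas hα0 hαbd hE hμE.ne hq'
      fun g hgm hg0 hgLp => ?_
    have hgint := memLp_one_iff_integrable.1 (hgLp 1)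
    calc _ ≤ _ := hbil _ g hχm hχ0 (hχLp _) (fun _ _ _ _ => hχint.restrict) hgm hg0 (hgLp _)
          fun _ _ _ _ => hgint.restrict
      _ = _ := by rw [lintegral_ofReal_indicator_one_rpow hmE hp'.pos, one_div q,
          hq'.one_sub_inv]
  · rw [one_div p, hp'.one_sub_inv]
    refine setLIntegral_tsum_rpow_inv_le_of_forall ℱ hαmeas hα0 hαbd hE hμE.ne hp'.symm
      fun f hfm hf0 hfLp => ?_
    have hfint := memLp_one_iff_integrable.1 (hfLp 1)
    calc _ = ∑' j, ∫⁻ ω, ENNReal.ofReal (α j ω) * ENNReal.ofReal ((μ[f|ℱ j]) ω) *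
            ENNReal.ofReal ((μ[E.indicator 1|ℱ j]) ω) ∂μ :=
          tsum_congr fun j => lintegral_congr fun ω => mul_right_comm _ _ _
      _ ≤ _ := hbil f _ hfm hf0 (hfLp _) (fun _ _ _ _ => hfint.restrict) hχm hχ0 (hχLp _)
          fun _ _ _ _ => hχint.restrict
      _ = _ := by rw [lintegral_ofReal_indicator_one_rpow hmE hq'.symm.pos, one_div p,
          mul_right_comm]

/-- necessity of the Sawyer checking conditions.  If the bilinear bound
`∑_i ∫ α_i E[f|F_i] E[g|F_i] dμ ≤ C ‖f‖_{L^p} ‖g‖_{L^{q'}}` holds for all nonnegative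
`f ∈ L^p ∩ 𝓛`, `g ∈ L^{q'} ∩ 𝓛`, then for every `i` and `E ∈ F_i` of finite measure the
two checking conditions hold. -/
theorem stmt10 {Ω : Type*} {m0 : MeasurableSpace Ω} (μ : Measure Ω) [SigmaFinite μ]
    (ℱ : MeasureTheory.Filtration ℤ m0) [∀ i, SigmaFinite (μ.trim (ℱ.le i))]
    (p q : ℝ) (hp : 1 < p) (hpq : p ≤ q)
    (α : ℤ → Ω → ℝ) (hαmeas : ∀ i, StronglyMeasurable[ℱ i] (α i))
    (hα0 : ∀ i ω, 0 ≤ α i ω) (hαbd : ∀ i, ∃ M : ℝ, ∀ ω, α i ω ≤ M)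
    (C : ℝ) (hC : 0 ≤ C)
    (hbil : ∀ f g : Ω → ℝ, Measurable f → 0 ≤ f → MemLp f (ENNReal.ofReal p) μ →
      (∀ (i : ℤ) (E : Set Ω), MeasurableSet[ℱ i] E → μ E < ∞ →
        Integrable f (μ.restrict E)) →
      Measurable g → 0 ≤ g → MemLp g (ENNReal.ofReal (q / (q - 1))) μ →
      (∀ (i : ℤ) (E : Set Ω), MeasurableSet[ℱ i] E → μ E < ∞ →
        Integrable g (μ.restrict E)) →
      ∑' i : ℤ, ∫⁻ ω, ENNReal.ofReal (α i ω) * ENNReal.ofReal ((μ[f|ℱ i]) ω) *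
          ENNReal.ofReal ((μ[g|ℱ i]) ω) ∂μ ≤
        ENNReal.ofReal C * (∫⁻ ω, ENNReal.ofReal (f ω) ^ p ∂μ) ^ (1 / p) *
          (∫⁻ ω, ENNReal.ofReal (g ω) ^ (q / (q - 1)) ∂μ) ^ (1 - 1 / q)) :
    ∀ (i : ℤ) (E : Set Ω), MeasurableSet[ℱ i] E → μ E < ∞ →
      (∫⁻ ω in E, (∑' j : ℤ, if i ≤ j then ENNReal.ofReal (α j ω) else 0) ^ q ∂μ) ^
          (1 / q) ≤ ENNReal.ofReal C * μ E ^ (1 / p) ∧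
      (∫⁻ ω in E, (∑' j : ℤ, if i ≤ j then ENNReal.ofReal (α j ω) else 0) ^
            (p / (p - 1)) ∂μ) ^ (1 - 1 / p) ≤ ENNReal.ofReal C * μ E ^ (1 - 1 / q) :=
  stmt10_general μ ℱ p q hp hpq α hαmeas hα0 hαbd C hbil
end
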